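/- arXiv:1705.10305 — 8 statements merged into one kernel-verified Lean document; each statement's English description precedes it below -/
import Mathlib

section
/- For every sampling cost ε > 0 and all σ_s² > 0, σ_c² > 0, the function f_ε : [0,∞) → ℝ is convex; that is, for all μ₁, μ₂ ≥ 0 and all λ ∈ [0,1], f_ε(λμ₁ + (1-λ)μ₂) ≤ λ f_ε(μ₁) + (1-λ) f_ε(μ₂). -/
lemma sq_div_key (A B Y₁ Y₂ : ℝ) (hA : 0 ≤ A) (hB : 0 ≤ B) (hY₁ : 0 ≤ Y₁)
    (hY₂ : 0 ≤ Y₂) (h1 : 0 < A → 0 < Y₁) (h2 : 0 < B → 0 < Y₂) :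
    (A + B) ^ 2 / (Y₁ + Y₂) ≤ A ^ 2 / Y₁ + B ^ 2 / Y₂ := by
  rcases eq_or_lt_of_le hA with hA0 | hApos
  · rcases eq_or_lt_of_le hB with hB0 | hBpos
    · simp [← hA0, ← hB0]
    · have hY2 := h2 hBpos
      rw [← hA0]
      simp only [zero_add, zero_pow, zero_div]
      calc B ^ 2 / (Y₁ + Y₂) ≤ B ^ 2 / Y₂ := by
            apply div_le_div_of_nonneg_left (by positivity) hY2 (by linarith)
        _ ≤ 0 ^ 2 / Y₁ + B ^ 2 / Y₂ := by simp
  · rcases eq_or_lt_of_le hB with hB0 | hBpos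
    · have hY1 := h1 hApos
      rw [← hB0]
      calc (A + 0) ^ 2 / (Y₁ + Y₂) ≤ A ^ 2 / Y₁ := by
            rw [add_zero]
            apply div_le_div_of_nonneg_left (by positivity) hY1 (by linarith)
        _ ≤ A ^ 2 / Y₁ + 0 ^ 2 / Y₂ := by simp
    · have hY1 := h1 hApos
      have hY2 := h2 hBpos
      rw [div_add_div _ _ (ne_of_gt hY1) (ne_of_gt hY2),
        div_le_div_iff₀ (by linarith) (by positivity)]
      nlinarith [sq_nonneg (A * Y₂ - B * Y₁), mul_pos hY1 hY2]

lemma scale_div (l a y : ℝ) (hl : 0 ≤ l) : (l * a) ^ 2 / (l * y) = l * (a ^ 2 / y) := by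
  rcases eq_or_lt_of_le hl with h | h
  · simp [← h]
  · rw [mul_pow]
    rw [show l ^ 2 * a ^ 2 = l * (l * a ^ 2) by ring, mul_div_assoc,
      mul_div_mul_left _ _ (ne_of_gt h)]



/-- Single-slot distortion function `f_ε(μ)`: the infimum over `θ ∈ [0,1]` and `ḡ ≥ 0`
with `θε + ḡ ≤ μ` of `(1-θ)σ_s² + θ²σ_s²σ_c²/(θσ_c² + ḡ)`.
(When `θ = 0` the second term is `0`, which agrees with Lean's division convention.) -/
noncomputable def fEps (ss sc ε μ : ℝ) : ℝ :=
  sInf {d : ℝ | ∃ θ g : ℝ, 0 ≤ θ ∧ θ ≤ 1 ∧ 0 ≤ g ∧ θ * ε + g ≤ μ ∧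
    d = (1 - θ) * ss + θ ^ 2 * ss * sc / (θ * sc + g)}

/-- for every `ε > 0`, `σ_s² > 0`, `σ_c² > 0`, the function `f_ε` is convex
on `[0,∞)`. -/
theorem fEps_convex (ss sc ε : ℝ) (hss : 0 < ss) (hsc : 0 < sc) (hε : 0 < ε) :
    ∀ μ₁ μ₂ lam : ℝ, 0 ≤ μ₁ → 0 ≤ μ₂ → 0 ≤ lam → lam ≤ 1 →
      fEps ss sc ε (lam * μ₁ + (1 - lam) * μ₂) ≤
        lam * fEps ss sc ε μ₁ + (1 - lam) * fEps ss sc ε μ₂ := by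
  intro μ₁ μ₂ lam hμ₁ hμ₂ hl hl1
  set S : ℝ → Set ℝ := fun μ => {d : ℝ | ∃ θ g : ℝ, 0 ≤ θ ∧ θ ≤ 1 ∧ 0 ≤ g ∧ θ * ε + g ≤ μ ∧
    d = (1 - θ) * ss + θ ^ 2 * ss * sc / (θ * sc + g)} with hS
  have hne : ∀ μ : ℝ, 0 ≤ μ → (S μ).Nonempty := by
    intro μ hμ
    exact ⟨ss, 0, 0, le_refl 0, zero_le_one, le_refl 0, by simpa using hμ, by norm_num⟩
  have hbdd : ∀ μ : ℝ, BddBelow (S μ) := by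
    intro μ
    refine ⟨0, fun d hd => ?_⟩
    obtain ⟨θ, g, hθ, hθ1, hg, _, hdeq⟩ := hd
    have h1 : 0 ≤ (1 - θ) * ss := by nlinarith
    have h2 : 0 ≤ θ ^ 2 * ss * sc / (θ * sc + g) := by positivity
    linarith [hdeq ▸ add_nonneg h1 h2]
  have key : ∀ d₁ ∈ S μ₁, ∀ d₂ ∈ S μ₂,
      fEps ss sc ε (lam * μ₁ + (1 - lam) * μ₂) ≤ lam * d₁ + (1 - lam) * d₂ := by
    intro d₁ hd₁ d₂ hd₂
    obtain ⟨θ₁, g₁, hθ₁, hθ₁1, hg₁, hc₁, he₁⟩ := hd₁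
    obtain ⟨θ₂, g₂, hθ₂, hθ₂1, hg₂, hc₂, he₂⟩ := hd₂
    set θ := lam * θ₁ + (1 - lam) * θ₂ with hθdef
    set g := lam * g₁ + (1 - lam) * g₂ with hgdef
    have hmem : (1 - θ) * ss + θ ^ 2 * ss * sc / (θ * sc + g)
        ∈ S (lam * μ₁ + (1 - lam) * μ₂) := by
      have h1lam : (0:ℝ) ≤ 1 - lam := by linarith
      refine ⟨θ, g, add_nonneg (mul_nonneg hl hθ₁) (mul_nonneg h1lam hθ₂), by nlinarith,
        add_nonneg (mul_nonneg hl hg₁) (mul_nonneg h1lam hg₂), by nlinarith, rfl⟩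
    have hdiv : θ ^ 2 / (θ * sc + g) ≤
        lam * (θ₁ ^ 2 / (θ₁ * sc + g₁)) + (1 - lam) * (θ₂ ^ 2 / (θ₂ * sc + g₂)) := by
      have h1 : (0:ℝ) < lam * θ₁ → 0 < lam * (θ₁ * sc + g₁) := by
        intro h
        nlinarith [mul_pos h hsc, mul_nonneg hl hg₁]
      have h2 : (0:ℝ) < (1 - lam) * θ₂ → 0 < (1 - lam) * (θ₂ * sc + g₂) := by
        intro h
        nlinarith [mul_pos h hsc, mul_nonneg (by linarith : (0:ℝ) ≤ 1 - lam) hg₂]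
      have := sq_div_key (lam * θ₁) ((1 - lam) * θ₂) (lam * (θ₁ * sc + g₁))
        ((1 - lam) * (θ₂ * sc + g₂)) (mul_nonneg hl hθ₁)
        (mul_nonneg (by linarith) hθ₂)
        (mul_nonneg hl (add_nonneg (mul_nonneg hθ₁ hsc.le) hg₁))
        (mul_nonneg (by linarith) (add_nonneg (mul_nonneg hθ₂ hsc.le) hg₂)) h1 h2
      rw [scale_div _ _ _ hl, scale_div _ _ _ (by linarith : (0:ℝ) ≤ 1 - lam)] at this
      have heq : lam * (θ₁ * sc + g₁) + (1 - lam) * (θ₂ * sc + g₂) = θ * sc + g := by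
        rw [hθdef, hgdef]; ring
      rwa [heq] at this
    have hdiv2 : θ ^ 2 * ss * sc / (θ * sc + g) ≤
        lam * (θ₁ ^ 2 * ss * sc / (θ₁ * sc + g₁)) +
        (1 - lam) * (θ₂ ^ 2 * ss * sc / (θ₂ * sc + g₂)) := by
      have := mul_le_mul_of_nonneg_right hdiv (by positivity : (0:ℝ) ≤ ss * sc)
      calc θ ^ 2 * ss * sc / (θ * sc + g) = θ ^ 2 / (θ * sc + g) * (ss * sc) := by ring
        _ ≤ (lam * (θ₁ ^ 2 / (θ₁ * sc + g₁)) +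
              (1 - lam) * (θ₂ ^ 2 / (θ₂ * sc + g₂))) * (ss * sc) := this
        _ = lam * (θ₁ ^ 2 * ss * sc / (θ₁ * sc + g₁)) +
              (1 - lam) * (θ₂ ^ 2 * ss * sc / (θ₂ * sc + g₂)) := by ring
    have hval : (1 - θ) * ss + θ ^ 2 * ss * sc / (θ * sc + g) ≤
        lam * d₁ + (1 - lam) * d₂ := by
      rw [he₁, he₂]
      have hlin : (1 - θ) * ss = lam * ((1 - θ₁) * ss) + (1 - lam) * ((1 - θ₂) * ss) := by
        rw [hθdef]; ring
      linarith
    exact le_trans (csInf_le (hbdd _) hmem) hval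
  -- now take infima
  apply le_of_forall_pos_le_add
  intro η hη
  obtain ⟨d₁, hd₁, hd₁'⟩ := Real.lt_sInf_add_pos (hne μ₁ hμ₁) (half_pos hη)
  obtain ⟨d₂, hd₂, hd₂'⟩ := Real.lt_sInf_add_pos (hne μ₂ hμ₂) (half_pos hη)
  have h := key d₁ hd₁ d₂ hd₂
  have e1 : lam * d₁ ≤ lam * (fEps ss sc ε μ₁ + η / 2) :=
    mul_le_mul_of_nonneg_left (le_of_lt hd₁') hl
  have e2 : (1 - lam) * d₂ ≤ (1 - lam) * (fEps ss sc ε μ₂ + η / 2) :=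
    mul_le_mul_of_nonneg_left (le_of_lt hd₂') (by linarith)
  nlinarith
end

section
/- For every sampling cost ε > 0, all σ_s² > 0, σ_c² > 0, every μ ≥ 0 and every λ ∈ [0,1], one has f_ε(λμ) ≤ f_ε(μ) + (1-λ)σ_s². -/
/-- for every `ε > 0`, `σ_s², σ_c² > 0`, `μ ≥ 0` and `λ ∈ [0,1]`,
`f_ε(λμ) ≤ f_ε(μ) + (1-λ)σ_s²`. -/
theorem fEps_scale_bound (ss sc ε μ lam : ℝ) (hss : 0 < ss) (hsc : 0 < sc) (hε : 0 < ε)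
    (hμ : 0 ≤ μ) (hlam0 : 0 ≤ lam) (hlam1 : lam ≤ 1) :
    fEps ss sc ε (lam * μ) ≤ fEps ss sc ε μ + (1 - lam) * ss := by
  unfold fEps
  have hbdd : ∀ ν : ℝ, BddBelow {d : ℝ | ∃ θ g : ℝ, 0 ≤ θ ∧ θ ≤ 1 ∧ 0 ≤ g ∧ θ * ε + g ≤ ν ∧
      d = (1 - θ) * ss + θ ^ 2 * ss * sc / (θ * sc + g)} := by
    intro ν
    refine ⟨0, ?_⟩
    rintro d ⟨θ, g, hθ0, hθ1, hg0, _, rfl⟩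
    have h1 : 0 ≤ (1 - θ) * ss := mul_nonneg (by linarith) hss.le
    have h2 : 0 ≤ θ ^ 2 * ss * sc / (θ * sc + g) := by
      apply div_nonneg
      · positivity
      · positivity
    linarith
  have hne : {d : ℝ | ∃ θ g : ℝ, 0 ≤ θ ∧ θ ≤ 1 ∧ 0 ≤ g ∧ θ * ε + g ≤ μ ∧
      d = (1 - θ) * ss + θ ^ 2 * ss * sc / (θ * sc + g)}.Nonempty := by
    refine ⟨ss, 0, 0, le_refl 0, zero_le_one, le_refl 0, by simpa using hμ, ?_⟩
    simp
  rw [← sub_le_iff_le_add]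
  apply le_csInf hne
  rintro b ⟨θ, g, hθ0, hθ1, hg0, hbud, rfl⟩
  rw [sub_le_iff_le_add]
  -- candidate point (lam*θ, lam*g)
  have hmem : (1 - lam * θ) * ss + (lam * θ) ^ 2 * ss * sc / (lam * θ * sc + lam * g) ∈
      {d : ℝ | ∃ θ g : ℝ, 0 ≤ θ ∧ θ ≤ 1 ∧ 0 ≤ g ∧ θ * ε + g ≤ lam * μ ∧
        d = (1 - θ) * ss + θ ^ 2 * ss * sc / (θ * sc + g)} := by
    refine ⟨lam * θ, lam * g, mul_nonneg hlam0 hθ0,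
      mul_le_one₀ hlam1 hθ0 hθ1, mul_nonneg hlam0 hg0, ?_, by ring_nf⟩
    have : lam * θ * ε + lam * g = lam * (θ * ε + g) := by ring
    rw [this]
    exact mul_le_mul_of_nonneg_left hbud hlam0
  have hle := csInf_le (hbdd (lam * μ)) hmem
  refine hle.trans ?_
  -- show value at scaled point ≤ value at (θ,g) + (1-lam)*ss
  have hlin : (1 - lam * θ) * ss ≤ (1 - θ) * ss + (1 - lam) * ss := by
    nlinarith [mul_nonneg hss.le (mul_nonneg (sub_nonneg.2 hlam1) (sub_nonneg.2 hθ1))]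
  have hterm : (lam * θ) ^ 2 * ss * sc / (lam * θ * sc + lam * g) ≤
      θ ^ 2 * ss * sc / (θ * sc + g) := by
    rcases eq_or_lt_of_le hlam0 with h | h
    · simp [← h]
      positivity
    rcases eq_or_lt_of_le (show (0:ℝ) ≤ θ * sc + g by positivity) with hD | hD
    · have hθz : θ = 0 := by nlinarith
      simp [hθz]
    · have hnum : (lam * θ) ^ 2 * ss * sc = lam * (lam * (θ ^ 2 * ss * sc)) := by ring
      have hden : lam * θ * sc + lam * g = lam * (θ * sc + g) := by ring
      rw [hnum, hden, mul_div_mul_left _ _ (ne_of_gt h)]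
      calc lam * (θ ^ 2 * ss * sc) / (θ * sc + g)
          = lam * (θ ^ 2 * ss * sc / (θ * sc + g)) := by ring
        _ ≤ 1 * (θ ^ 2 * ss * sc / (θ * sc + g)) := by
            apply mul_le_mul_of_nonneg_right hlam1
            positivity
        _ = θ ^ 2 * ss * sc / (θ * sc + g) := one_mul _
  linarith
end

section
/- For all σ_s² > 0 and σ_c² > 0, the function h(θ, ḡ) = (1-θ)σ_s² + θ²σ_s²σ_c²/(θσ_c² + ḡ) (with the second term taken to be 0 when θ = 0) is jointly convex on the set {(θ, ḡ) : 0 ≤ θ ≤ 1, ḡ ≥ 0}. -/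
lemma key_ineq (K : ℝ) (hK : 0 ≤ K) (a b x1 x2 y1 y2 : ℝ)
    (ha : 0 ≤ a) (hb : 0 ≤ b) (hab : a + b = 1)
    (hx1 : 0 ≤ x1) (hx2 : 0 ≤ x2)
    (hy1 : 0 ≤ y1) (hy2 : 0 ≤ y2)
    (h1 : y1 = 0 → x1 = 0) (h2 : y2 = 0 → x2 = 0) :
    (a * x1 + b * x2) ^ 2 * K / (a * y1 + b * y2) ≤
      a * (x1 ^ 2 * K / y1) + b * (x2 ^ 2 * K / y2) := by
  rcases eq_or_lt_of_le ha with ha0 | ha0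
  · have hb1 : b = 1 := by linarith
    simp [← ha0, hb1]
  rcases eq_or_lt_of_le hb with hb0 | hb0
  · have ha1 : a = 1 := by linarith
    simp [← hb0, ha1]
  rcases eq_or_lt_of_le hy1 with hy10 | hy10
  · have hx10 : x1 = 0 := h1 hy10.symm
    rcases eq_or_lt_of_le hy2 with hy20 | hy20
    · have hx20 : x2 = 0 := h2 hy20.symm
      simp [← hy10, ← hy20, hx10, hx20]
    · rw [hx10, ← hy10]
      apply le_of_eq
      field_simp
      ring
  rcases eq_or_lt_of_le hy2 with hy20 | hy20
  · have hx20 : x2 = 0 := h2 hy20.symm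
    rw [hx20, ← hy20]
    apply le_of_eq
    field_simp
    ring
  -- main case: y1, y2 > 0
  have hd : 0 < a * y1 + b * y2 := by positivity
  rw [div_le_iff₀ hd]
  set u := x1 ^ 2 * K / y1 with hu
  set v := x2 ^ 2 * K / y2 with hv
  have hu1 : u * y1 = x1 ^ 2 * K := div_mul_cancel₀ _ (ne_of_gt hy10)
  have hv1 : v * y2 = x2 ^ 2 * K := div_mul_cancel₀ _ (ne_of_gt hy20)
  have hu0 : 0 ≤ u := by positivity
  have hv0 : 0 ≤ v := by positivity
  have hcross : 2 * (x1 * x2 * K) ≤ u * y2 + v * y1 := by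
    have hprod : (u * y2) * (v * y1) = (x1 * x2 * K) ^ 2 := by
      have h : (u * y2) * (v * y1) = (u * y1) * (v * y2) := by ring
      rw [h, hu1, hv1]; ring
    have hP : 0 ≤ u * y2 := mul_nonneg hu0 hy2
    have hQ : 0 ≤ v * y1 := mul_nonneg hv0 hy1
    have hs : 0 ≤ x1 * x2 * K := by positivity
    have h4 : (2 * (x1 * x2 * K)) ^ 2 ≤ (u * y2 + v * y1) ^ 2 := by
      nlinarith [sq_nonneg (u * y2 - v * y1)]
    exact le_of_sq_le_sq h4 (by positivity)
  have key2 : a * b * (2 * (x1 * x2 * K)) ≤ a * b * (u * y2 + v * y1) :=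
    mul_le_mul_of_nonneg_left hcross (by positivity)
  have e1 : a ^ 2 * (u * y1) = a ^ 2 * (x1 ^ 2 * K) := by rw [hu1]
  have e2 : b ^ 2 * (v * y2) = b ^ 2 * (x2 ^ 2 * K) := by rw [hv1]
  nlinarith [e1, e2, key2]

/-- the function `h(θ, ḡ) = (1-θ)σ_s² + θ²σ_s²σ_c²/(θσ_c² + ḡ)` is jointly
convex on `{(θ, ḡ) : 0 ≤ θ ≤ 1, ḡ ≥ 0}`. (When `θ = 0` the second term is `0`,
which agrees with Lean's division convention.) -/
theorem h_convexOn (ss sc : ℝ) (hss : 0 < ss) (hsc : 0 < sc) :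
    ConvexOn ℝ {p : ℝ × ℝ | 0 ≤ p.1 ∧ p.1 ≤ 1 ∧ 0 ≤ p.2}
      (fun p : ℝ × ℝ => (1 - p.1) * ss + p.1 ^ 2 * ss * sc / (p.1 * sc + p.2)) := by
  constructor
  · intro p hp q hq a b ha hb hab
    obtain ⟨hp1, hp2, hp3⟩ := hp
    obtain ⟨hq1, hq2, hq3⟩ := hq
    refine ⟨?_, ?_, ?_⟩ <;>
      simp only [Set.mem_setOf_eq, Prod.smul_fst, Prod.smul_snd, Prod.fst_add,
        Prod.snd_add, smul_eq_mul]
    · exact add_nonneg (mul_nonneg ha hp1) (mul_nonneg hb hq1)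
    · nlinarith
    · exact add_nonneg (mul_nonneg ha hp3) (mul_nonneg hb hq3)
  · intro p hp q hq a b ha hb hab
    obtain ⟨hp1, hp2, hp3⟩ := hp
    obtain ⟨hq1, hq2, hq3⟩ := hq
    simp only [Prod.smul_fst, Prod.smul_snd, Prod.fst_add, Prod.snd_add, smul_eq_mul]
    set x1 := p.1
    set x2 := q.1
    set y1 := p.1 * sc + p.2 with hy1def
    set y2 := q.1 * sc + q.2 with hy2def
    have hy1 : 0 ≤ y1 := add_nonneg (mul_nonneg hp1 hsc.le) hp3
    have hy2 : 0 ≤ y2 := add_nonneg (mul_nonneg hq1 hsc.le) hq3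
    have h1 : y1 = 0 → x1 = 0 := by
      intro h; nlinarith
    have h2 : y2 = 0 → x2 = 0 := by
      intro h; nlinarith
    have hden : (a * p.1 + b * q.1) * sc + (a * p.2 + b * q.2) = a * y1 + b * y2 := by
      rw [hy1def, hy2def]; ring
    rw [hden]
    have hkey := key_ineq (ss * sc) (by positivity) a b x1 x2 y1 y2 ha hb hab hp1 hq1
      hy1 hy2 h1 h2
    have hshape : (a * p.1 + b * q.1) ^ 2 * ss * sc / (a * y1 + b * y2)
        = (a * x1 + b * x2) ^ 2 * (ss * sc) / (a * y1 + b * y2) := by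
      show _ = (a * p.1 + b * q.1) ^ 2 * (ss * sc) / (a * y1 + b * y2)
      ring
    have hshape1 : x1 ^ 2 * ss * sc / y1 = x1 ^ 2 * (ss * sc) / y1 := by ring_nf
    have hshape2 : x2 ^ 2 * ss * sc / y2 = x2 ^ 2 * (ss * sc) / y2 := by ring_nf
    have haff : (1 - (a * p.1 + b * q.1)) * ss
        = a * ((1 - x1) * ss) + b * ((1 - x2) * ss) := by
      have : a = 1 - b := by linarith
      rw [this]; ring
    rw [hshape, haff, hshape1, hshape2] at *
    linarith [hkey]
end

section
/- Let σ_s² > 0, σ_c² > 0, ε > 0, C ≥ 0 and n ≥ 1. For any θ_1, …, θ_n ∈ [0,1] and nonnegative reals ḡ_1, …, ḡ_n with (1/n)·Σ_{t=1}^n (θ_t ε + ḡ_t) ≤ C, one has (1/n)·Σ_{t=1}^n [(1-θ_t)σ_s² + θ_t²σ_s²σ_c²/(θ_t σ_c² + ḡ_t)] ≥ f_ε(C), where the term θ_t²σ_s²σ_c²/(θ_t σ_c² + ḡ_t) is taken to be 0 when θ_t = 0. -/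
/-- Subgradient inequality for the quadratic-over-linear function `x^2 / y`. -/
lemma key_ineq_s7 (tb a x b : ℝ) (ha : 0 < a) (hb : 0 ≤ b) (hbz : b = 0 → x = 0) :
    tb ^ 2 / a + (2 * tb / a) * (x - tb) - (tb ^ 2 / a ^ 2) * (b - a) ≤ x ^ 2 / b := by
  rcases eq_or_lt_of_le hb with h | h
  · have hx : x = 0 := hbz h.symm
    rw [← h, hx]
    have : (0:ℝ) ^ 2 / (0:ℝ) = 0 := by simp
    rw [this]
    have hz : tb ^ 2 / a + 2 * tb / a * (0 - tb) - tb ^ 2 / a ^ 2 * (0 - a) = 0 := by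
      field_simp; ring
    rw [hz]
  · rw [← sub_nonneg]
    have : x ^ 2 / b - (tb ^ 2 / a + (2 * tb / a) * (x - tb) - (tb ^ 2 / a ^ 2) * (b - a))
        = (a * x - b * tb) ^ 2 / (a ^ 2 * b) := by
      field_simp
      ring
    rw [this]
    positivity

lemma sum_identity (ss sc tb gb a nn : ℝ) (hane : a ≠ 0) (ha : a = tb * sc + gb) :
    nn * (ss + ss * sc * (tb ^ 2 / a - (2 * tb / a) * tb + (tb ^ 2 / a ^ 2) * a))
      + (ss * sc * (2 * tb / a - (tb ^ 2 / a ^ 2) * sc) - ss) * (nn * tb)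
      + (-(ss * sc * (tb ^ 2 / a ^ 2))) * (nn * gb)
    = nn * ((1 - tb) * ss + tb ^ 2 * ss * sc / a) := by
  field_simp
  linear_combination (nn * ss * sc * tb ^ 2) * ha

/-- the average of the single-slot distortions is at least `f_ε(C)` whenever
the average energy consumption is at most `C`. -/
theorem average_distortion_lower_bound (ss sc ε C : ℝ) (hss : 0 < ss) (hsc : 0 < sc)
    (hε : 0 < ε) (hC : 0 ≤ C) (n : ℕ) (hn : 1 ≤ n) (θ g : Fin n → ℝ)
    (hθ0 : ∀ t, 0 ≤ θ t) (hθ1 : ∀ t, θ t ≤ 1) (hg : ∀ t, 0 ≤ g t)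
    (havg : (1 / (n : ℝ)) * ∑ t, (θ t * ε + g t) ≤ C) :
    fEps ss sc ε C ≤
      (1 / (n : ℝ)) * ∑ t, ((1 - θ t) * ss + (θ t) ^ 2 * ss * sc / (θ t * sc + g t)) := by
  have hn0 : (0:ℝ) < (n:ℝ) := by exact_mod_cast Nat.lt_of_lt_of_le Nat.zero_lt_one hn
  have hn0' : (n:ℝ) ≠ 0 := ne_of_gt hn0
  set T := ∑ t, θ t with hT
  set Gs := ∑ t, g t with hGs
  set tb := T / n with htb
  set gb := Gs / n with hgb
  clear_value T Gs tb gb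
  have hT0 : 0 ≤ T := hT ▸ Finset.sum_nonneg fun t _ => hθ0 t
  have hG0 : 0 ≤ Gs := hGs ▸ Finset.sum_nonneg fun t _ => hg t
  have hT1 : T ≤ n := by
    rw [hT]
    calc (∑ t, θ t) ≤ ∑ _t : Fin n, (1:ℝ) := Finset.sum_le_sum fun t _ => hθ1 t
    _ = n := by simp
  have htb0 : 0 ≤ tb := htb ▸ div_nonneg hT0 hn0.le
  have htb1 : tb ≤ 1 := by rw [htb, div_le_one hn0]; exact hT1
  have hgb0 : 0 ≤ gb := hgb ▸ div_nonneg hG0 hn0.le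
  have hfeas : tb * ε + gb ≤ C := by
    have : (1 / (n : ℝ)) * ∑ t, (θ t * ε + g t) = tb * ε + gb := by
      rw [Finset.sum_add_distrib, ← Finset.sum_mul, ← hT, ← hGs, htb, hgb]
      field_simp
    linarith [havg]
  have hbdd : BddBelow {d : ℝ | ∃ θ' g' : ℝ, 0 ≤ θ' ∧ θ' ≤ 1 ∧ 0 ≤ g' ∧ θ' * ε + g' ≤ C ∧
      d = (1 - θ') * ss + θ' ^ 2 * ss * sc / (θ' * sc + g')} := by
    refine ⟨0, fun d hd => ?_⟩
    obtain ⟨θ', g', h0, h1, hg', _, hd⟩ := hd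
    rw [hd]
    have : 0 ≤ (1 - θ') * ss := mul_nonneg (by linarith) hss.le
    have h2 : 0 ≤ θ' ^ 2 * ss * sc / (θ' * sc + g') :=
      div_nonneg (by positivity) (add_nonneg (mul_nonneg h0 hsc.le) hg')
    linarith
  have hmem : (1 - tb) * ss + tb ^ 2 * ss * sc / (tb * sc + gb) ∈
      {d : ℝ | ∃ θ' g' : ℝ, 0 ≤ θ' ∧ θ' ≤ 1 ∧ 0 ≤ g' ∧ θ' * ε + g' ≤ C ∧
        d = (1 - θ') * ss + θ' ^ 2 * ss * sc / (θ' * sc + g')} :=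
    ⟨tb, gb, htb0, htb1, hgb0, hfeas, rfl⟩
  have hinf : fEps ss sc ε C ≤ (1 - tb) * ss + tb ^ 2 * ss * sc / (tb * sc + gb) :=
    csInf_le hbdd hmem
  refine le_trans hinf ?_
  have ha0 : 0 ≤ tb * sc + gb := add_nonneg (mul_nonneg htb0 hsc.le) hgb0
  rcases eq_or_lt_of_le ha0 with haz | hap
  · -- degenerate case: all θ and g are zero
    have htbz : tb = 0 := by nlinarith [mul_nonneg htb0 hsc.le]
    have hgbz : gb = 0 := by nlinarith [mul_nonneg htb0 hsc.le]
    have hTz : T = 0 := by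
      rw [htb, div_eq_zero_iff] at htbz; exact htbz.resolve_right hn0'
    have hGz : Gs = 0 := by
      rw [hgb, div_eq_zero_iff] at hgbz; exact hgbz.resolve_right hn0'
    have hθz : ∀ t, θ t = 0 := fun t =>
      (Finset.sum_eq_zero_iff_of_nonneg (fun t _ => hθ0 t)).mp (hT ▸ hTz) t (Finset.mem_univ t)
    have hgz : ∀ t, g t = 0 := fun t =>
      (Finset.sum_eq_zero_iff_of_nonneg (fun t _ => hg t)).mp (hGs ▸ hGz) t (Finset.mem_univ t)
    have hterm : ∀ t : Fin n, (1 - θ t) * ss + (θ t) ^ 2 * ss * sc / (θ t * sc + g t) = ss := by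
      intro t; rw [hθz t, hgz t]; simp
    rw [Finset.sum_congr rfl (fun t _ => hterm t), htbz, hgbz, Finset.sum_const,
      Finset.card_univ, Fintype.card_fin]
    simp only [nsmul_eq_mul]
    have h' : (1/(n:ℝ)) * ((n:ℝ) * ss) = ss := by field_simp
    rw [h']
    norm_num
  · -- convexity argument
    set a := tb * sc + gb with ha
    clear_value a
    have hane : a ≠ 0 := ne_of_gt hap
    have hper : ∀ t ∈ Finset.univ, (1 - θ t) * ss + ss * sc *
        (tb ^ 2 / a + (2 * tb / a) * (θ t - tb) - (tb ^ 2 / a ^ 2) * (θ t * sc + g t - a)) ≤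
        (1 - θ t) * ss + (θ t) ^ 2 * ss * sc / (θ t * sc + g t) := by
      intro t _
      have hb0 : 0 ≤ θ t * sc + g t := add_nonneg (mul_nonneg (hθ0 t) hsc.le) (hg t)
      have hbz : θ t * sc + g t = 0 → θ t = 0 := by
        intro h
        have h1 : θ t * sc ≤ 0 := by linarith [hg t]
        have h2 : 0 ≤ θ t * sc := mul_nonneg (hθ0 t) hsc.le
        have : θ t * sc = 0 := le_antisymm h1 h2
        exact (mul_eq_zero.mp this).resolve_right (ne_of_gt hsc)
      have hk := key_ineq_s7 tb a (θ t) (θ t * sc + g t) hap hb0 hbz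
      have hmul := mul_le_mul_of_nonneg_left hk (by positivity : (0:ℝ) ≤ ss * sc)
      have heq : (θ t) ^ 2 * ss * sc / (θ t * sc + g t)
          = ss * sc * ((θ t) ^ 2 / (θ t * sc + g t)) := by ring
      rw [heq]
      linarith
    have hsum := Finset.sum_le_sum hper
    have hsumL : ∑ t, ((1 - θ t) * ss + ss * sc *
        (tb ^ 2 / a + (2 * tb / a) * (θ t - tb) - (tb ^ 2 / a ^ 2) * (θ t * sc + g t - a)))
        = n * ((1 - tb) * ss + tb ^ 2 * ss * sc / a) := by
      have e1 : ∀ t : Fin n, (1 - θ t) * ss + ss * sc *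
          (tb ^ 2 / a + (2 * tb / a) * (θ t - tb) - (tb ^ 2 / a ^ 2) * (θ t * sc + g t - a)) =
          (ss + ss * sc * (tb ^ 2 / a - (2 * tb / a) * tb + (tb ^ 2 / a ^ 2) * a))
          + (ss * sc * (2 * tb / a - (tb ^ 2 / a ^ 2) * sc) - ss) * θ t
          + (- (ss * sc * (tb ^ 2 / a ^ 2))) * g t := by
        intro t; ring
      rw [Finset.sum_congr rfl (fun t _ => e1 t)]
      rw [Finset.sum_add_distrib, Finset.sum_add_distrib, ← Finset.mul_sum, ← Finset.mul_sum,
        Finset.sum_const, Finset.card_univ, Fintype.card_fin, ← hT, ← hGs]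
      have hTe : T = n * tb := by rw [htb]; field_simp
      have hGe : Gs = n * gb := by rw [hgb]; field_simp
      rw [hTe, hGe, nsmul_eq_mul]
      exact sum_identity ss sc tb gb a n hane ha
    rw [hsumL] at hsum
    have step : (1 - tb) * ss + tb ^ 2 * ss * sc / a =
        (1/(n:ℝ)) * ((n:ℝ) * ((1 - tb) * ss + tb ^ 2 * ss * sc / a)) := by
      field_simp
    refine le_trans (le_of_eq step) ?_
    exact mul_le_mul_of_nonneg_left hsum (by positivity)
end

section
/- Let σ_s² > 0, σ_c² > 0, μ ≥ 0 and 0 < p ≤ 1. Then p · Σ_{k=1}^∞ p(1-p)^{k-1} · (Σ_{t=1}^k σ_s²/(1 + (1-p)^{t-1}μ/σ_c²)) ≤ σ_s²/(1 + μ/σ_c²) + σ_s²/2. -/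
/-- the renewal-averaged long term distortion of the fixed fraction policy
under Bernoulli energy arrivals is at most `f(μ) + σ_s²/2` where `f(x) = σ_s²/(1 + x/σ_c²)`. -/
theorem ffp_distortion_upper_bound (ss sc μ p : ℝ) (hss : 0 < ss) (hsc : 0 < sc)
    (hμ : 0 ≤ μ) (hp0 : 0 < p) (hp1 : p ≤ 1) :
    p * ∑' k : ℕ, p * (1 - p) ^ k *
        (∑ t ∈ Finset.range (k + 1), ss / (1 + (1 - p) ^ t * μ / sc)) ≤
      ss / (1 + μ / sc) + ss / 2 := by
  set q := 1 - p with hqdef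
  have hq0 : 0 ≤ q := by simp only [hqdef]; linarith
  have hq1 : q < 1 := by simp only [hqdef]; linarith
  have hpq : 1 - q = p := by simp [hqdef]
  simp only [mul_div_assoc]
  set m := μ / sc with hmdef
  have hm0 : 0 ≤ m := div_nonneg hμ hsc.le
  have hqt0 : ∀ t : ℕ, (0:ℝ) ≤ q ^ t := fun t => pow_nonneg hq0 t
  have hden : ∀ t : ℕ, 0 < 1 + q ^ t * m := fun t => by nlinarith [hqt0 t]
  set a : ℕ → ℝ := fun t => ss / (1 + q ^ t * m) with hadef
  have ha_pos : ∀ t, 0 < a t := fun t => div_pos hss (hden t)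
  have ha_le : ∀ t, a t ≤ ss := fun t =>
    div_le_self hss.le (by nlinarith [hqt0 t])
  have hgeo : Summable fun t : ℕ => q ^ t := summable_geometric_of_lt_one hq0 hq1
  -- the double-indexed family
  set f : ℕ → ℕ → ℝ := fun k t => if t ≤ k then p * q ^ k * a t else 0 with hfdef
  have hf0 : ∀ k t, 0 ≤ f k t := by
    intro k t
    simp only [hfdef]
    split
    · have := (ha_pos t).le; positivity
    · exact le_rfl
  -- rows are finitely supported
  have hrow_sum : ∀ k : ℕ, Summable fun t => f k t := by
    intro k
    apply summable_of_ne_finset_zero (s := Finset.range (k + 1))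
    intro t ht
    simp only [Finset.mem_range, not_lt] at ht
    simp only [hfdef]
    rw [if_neg (by omega)]
  have hrow_tsum : ∀ k : ℕ, (∑' t, f k t) = p * q ^ k * ∑ t ∈ Finset.range (k + 1), a t := by
    intro k
    rw [tsum_eq_sum (s := Finset.range (k + 1))]
    · rw [Finset.mul_sum]
      apply Finset.sum_congr rfl
      intro t ht
      simp only [Finset.mem_range] at ht
      simp only [hfdef]
      rw [if_pos (by omega)]
    · intro t ht
      simp only [Finset.mem_range, not_lt] at ht
      simp only [hfdef]
      rw [if_neg (by omega)]
  -- summability of row sums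
  have hkpow : Summable fun k : ℕ => ((k : ℝ) + 1) * q ^ k := by
    have h1 : Summable fun k : ℕ => (k : ℝ) ^ 1 * q ^ k :=
      summable_pow_mul_geometric_of_norm_lt_one 1 (by rwa [Real.norm_eq_abs, abs_of_nonneg hq0])
    simpa [add_mul, pow_one] using h1.add hgeo
  have hrowsums : Summable fun k : ℕ => p * q ^ k * ∑ t ∈ Finset.range (k + 1), a t := by
    refine Summable.of_nonneg_of_le
      (f := fun k : ℕ => p * ss * (((k : ℝ) + 1) * q ^ k)) ?_ ?_ ?_
    · intro k
      have : 0 ≤ ∑ t ∈ Finset.range (k + 1), a t :=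
        Finset.sum_nonneg fun t _ => (ha_pos t).le
      positivity
    · intro k
      have hsum_le : ∑ t ∈ Finset.range (k + 1), a t ≤ ((k : ℝ) + 1) * ss := by
        calc ∑ t ∈ Finset.range (k + 1), a t ≤ ∑ t ∈ Finset.range (k + 1), ss :=
              Finset.sum_le_sum fun t _ => ha_le t
          _ = ((k : ℝ) + 1) * ss := by
              rw [Finset.sum_const, Finset.card_range]; ring
      calc p * q ^ k * ∑ t ∈ Finset.range (k + 1), a t
          ≤ p * q ^ k * (((k : ℝ) + 1) * ss) := by
            apply mul_le_mul_of_nonneg_left hsum_le (by positivity)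
        _ = p * ss * (((k : ℝ) + 1) * q ^ k) := by ring
    · exact (hkpow.mul_left (p * ss))
  have hF : Summable (Function.uncurry f) := by
    refine (summable_prod_of_nonneg (fun x => hf0 x.1 x.2)).2
      ⟨fun k => hrow_sum k, hrowsums.congr fun k => (hrow_tsum k).symm⟩
  -- column sums
  have hcol_sum : ∀ t : ℕ, Summable fun k => f k t := by
    intro t
    refine Summable.of_nonneg_of_le (f := fun k : ℕ => p * ss * q ^ k)
      (fun k => hf0 k t) ?_ ?_
    · intro k
      simp only [hfdef]
      split
      · nlinarith [mul_nonneg (mul_nonneg hp0.le (hqt0 k)) (sub_nonneg.mpr (ha_le t))]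
      · positivity
    · exact hgeo.mul_left (p * ss)
  have hcol_tsum : ∀ t : ℕ, (∑' k, f k t) = q ^ t * a t := by
    intro t
    have h := (hcol_sum t).sum_add_tsum_nat_add t
    have h1 : ∑ k ∈ Finset.range t, f k t = 0 := by
      apply Finset.sum_eq_zero
      intro k hk
      simp only [Finset.mem_range] at hk
      simp only [hfdef]
      rw [if_neg (by omega)]
    have h2 : (∑' k : ℕ, f (k + t) t) = p * q ^ t * a t * ∑' k : ℕ, q ^ k := by
      rw [← tsum_mul_left]
      apply tsum_congr
      intro k
      simp only [hfdef]
      rw [if_pos (by omega), pow_add]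
      ring
    rw [← h, h1, zero_add, h2, tsum_geometric_of_lt_one hq0 hq1, hpq]
    field_simp
  -- Fubini
  have hswap : (∑' k : ℕ, p * q ^ k * ∑ t ∈ Finset.range (k + 1), a t)
      = ∑' t : ℕ, q ^ t * a t := by
    calc (∑' k : ℕ, p * q ^ k * ∑ t ∈ Finset.range (k + 1), a t)
        = ∑' k, ∑' t, f k t := by
          exact (tsum_congr fun k => (hrow_tsum k).symm)
      _ = ∑' t, ∑' k, f k t := hF.tsum_comm.symm
      _ = ∑' t : ℕ, q ^ t * a t := tsum_congr hcol_tsum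
  rw [hswap]
  -- Step 2: rewrite q^t * a t = ss * q^t - b t
  set b : ℕ → ℝ := fun t => q ^ t * ss * (q ^ t * m) / (1 + q ^ t * m) with hbdef
  have hb0 : ∀ t, 0 ≤ b t := by
    intro t
    simp only [hbdef]
    have := hden t
    have := hqt0 t
    positivity
  have hb_le : ∀ t, b t ≤ ss * q ^ t := by
    intro t
    simp only [hbdef]
    rw [div_le_iff₀ (hden t)]
    nlinarith [hqt0 t, hden t, mul_nonneg (hqt0 t) hm0]
  have hb_summable : Summable b :=
    Summable.of_nonneg_of_le hb0 hb_le (hgeo.mul_left ss)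
  have hqa_eq : ∀ t : ℕ, q ^ t * a t = ss * q ^ t - b t := by
    intro t
    have hne : (1 + q ^ t * m) ≠ 0 := (hden t).ne'
    simp only [hadef, hbdef]
    rw [eq_sub_iff_add_eq, ← mul_div_assoc, ← add_div, div_eq_iff hne]
    ring
  have hssq : Summable fun t : ℕ => ss * q ^ t := hgeo.mul_left ss
  have htsum_eq : (∑' t : ℕ, q ^ t * a t) = ss / p - ∑' t, b t := by
    calc (∑' t : ℕ, q ^ t * a t) = ∑' t : ℕ, (ss * q ^ t - b t) := tsum_congr hqa_eq
      _ = (∑' t : ℕ, ss * q ^ t) - ∑' t, b t := hssq.tsum_sub hb_summable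
      _ = ss / p - ∑' t, b t := by
          rw [tsum_mul_left, tsum_geometric_of_lt_one hq0 hq1, hpq, div_eq_mul_inv]
  rw [htsum_eq, mul_sub, mul_div_cancel₀ _ hp0.ne']
  -- now goal : ss - p * ∑' t, b t ≤ ss / (1 + m) + ss / 2
  have hbt_nonneg : 0 ≤ ∑' t, b t := tsum_nonneg hb0
  have h1m : (0:ℝ) < 1 + m := by linarith
  rcases le_or_gt m 1 with hm1 | hm1
  · -- easy case: f(μ) ≥ ss/2
    have : ss / 2 ≤ ss / (1 + m) := by
      apply div_le_div_of_nonneg_left hss.le h1m (by linarith)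
    nlinarith [mul_nonneg hp0.le hbt_nonneg]
  · -- hard case: m > 1
    obtain ⟨T, hT, hTmin⟩ : ∃ T : ℕ, q ^ T * m < 1 ∧ ∀ t < T, 1 ≤ q ^ t * m := by
      have hex : ∃ n : ℕ, q ^ n * m < 1 := by
        obtain ⟨n, hn⟩ := exists_pow_lt_of_lt_one (show (0:ℝ) < 1 / m by positivity) hq1
        exact ⟨n, by rwa [← lt_div_iff₀ (by linarith : (0:ℝ) < m)]⟩
      refine ⟨Nat.find hex, Nat.find_spec hex, fun t ht => ?_⟩
      have := Nat.find_min hex ht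
      linarith [not_lt.mp this]
    -- lower bound for the tail sum
    have hstep : ∀ t < T, ss / 2 * q ^ t ≤ b t := by
      intro t ht
      have hx := hTmin t ht
      simp only [hbdef]
      rw [le_div_iff₀ (hden t)]
      nlinarith [mul_nonneg (mul_nonneg (hqt0 t) hss.le) (sub_nonneg.mpr hx)]
    have hfin : ∑ t ∈ Finset.range T, (ss / 2 * q ^ t) ≤ ∑ t ∈ Finset.range T, b t := by
      apply Finset.sum_le_sum
      intro t ht
      exact hstep t (Finset.mem_range.mp ht)
    have hfin_le_tsum : ∑ t ∈ Finset.range T, b t ≤ ∑' t, b t :=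
      hb_summable.sum_le_tsum _ (fun t _ => hb0 t)
    have hgeom_sum : ∑ t ∈ Finset.range T, (ss / 2 * q ^ t) = ss / 2 * ((1 - q ^ T) / p) := by
      rw [← Finset.mul_sum, geom_sum_eq hq1.ne]
      congr 1
      rw [← hpq, ← neg_sub 1 (q ^ T), ← neg_sub 1 q, neg_div_neg_eq]
    have hqT : q ^ T ≤ 1 / m := by
      rw [← lt_div_iff₀ (by linarith : (0:ℝ) < m)] at hT
      exact hT.le
    -- combine
    have hkey : ss / 2 * ((1 - 1 / m) / p) ≤ ∑' t, b t := by
      calc ss / 2 * ((1 - 1 / m) / p) ≤ ss / 2 * ((1 - q ^ T) / p) := by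
            have hnum : 1 - 1 / m ≤ 1 - q ^ T := by linarith
            have h2 : (1 - 1 / m) / p ≤ (1 - q ^ T) / p :=
              div_le_div_of_nonneg_right hnum hp0.le
            nlinarith [h2]
        _ = ∑ t ∈ Finset.range T, (ss / 2 * q ^ t) := hgeom_sum.symm
        _ ≤ ∑ t ∈ Finset.range T, b t := hfin
        _ ≤ ∑' t, b t := hfin_le_tsum
    have hpkey : ss / 2 * (1 - 1 / m) ≤ p * ∑' t, b t := by
      have := mul_le_mul_of_nonneg_left hkey hp0.le
      calc ss / 2 * (1 - 1 / m) = p * (ss / 2 * ((1 - 1 / m) / p)) := by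
            field_simp
        _ ≤ p * ∑' t, b t := this
    have hfrac : ss / (2 * m) ≤ ss / (1 + m) := by
      apply div_le_div_of_nonneg_left hss.le h1m (by linarith)
    have hexp : ss / 2 * (1 - 1 / m) = ss / 2 - ss / (2 * m) := by
      field_simp
    linarith
end

section
/- Let σ_s² > 0, σ_c² > 0, ε > 0, μ ≥ 0 and 0 < p ≤ 1. Then p · Σ_{k=1}^∞ p(1-p)^{k-1} · (Σ_{t=1}^k f_ε((1-p)^{t-1}μ)) ≤ f_ε(μ) + σ_s²/2. -/
lemma fEps_mem_ss (ss sc ε : ℝ) {μ : ℝ} (hμ : 0 ≤ μ) :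
    ss ∈ {d : ℝ | ∃ θ g : ℝ, 0 ≤ θ ∧ θ ≤ 1 ∧ 0 ≤ g ∧ θ * ε + g ≤ μ ∧
      d = (1 - θ) * ss + θ ^ 2 * ss * sc / (θ * sc + g)} :=
  ⟨0, 0, le_refl _, zero_le_one, le_refl _, by simpa, by norm_num⟩

lemma fEps_lb (ss sc ε μ : ℝ) (hss : 0 ≤ ss) (hsc : 0 ≤ sc) :
    ∀ d ∈ {d : ℝ | ∃ θ g : ℝ, 0 ≤ θ ∧ θ ≤ 1 ∧ 0 ≤ g ∧ θ * ε + g ≤ μ ∧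
      d = (1 - θ) * ss + θ ^ 2 * ss * sc / (θ * sc + g)}, (0:ℝ) ≤ d := by
  rintro d ⟨θ, g, hθ0, hθ1, hg, _, rfl⟩
  have h1 : 0 ≤ (1 - θ) * ss := mul_nonneg (by linarith) hss
  have h2 : 0 ≤ θ ^ 2 * ss * sc / (θ * sc + g) :=
    div_nonneg (mul_nonneg (mul_nonneg (pow_nonneg hθ0 2) hss) hsc)
      (add_nonneg (mul_nonneg hθ0 hsc) hg)
  linarith

lemma fEps_nonneg (ss sc ε μ : ℝ) (hss : 0 ≤ ss) (hsc : 0 ≤ sc) (hμ : 0 ≤ μ) :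
    0 ≤ fEps ss sc ε μ :=
  le_csInf ⟨ss, fEps_mem_ss ss sc ε hμ⟩ (fEps_lb ss sc ε μ hss hsc)

lemma fEps_le_ss (ss sc ε μ : ℝ) (hss : 0 ≤ ss) (hsc : 0 ≤ sc) (hμ : 0 ≤ μ) :
    fEps ss sc ε μ ≤ ss :=
  csInf_le ⟨0, fEps_lb ss sc ε μ hss hsc⟩ (fEps_mem_ss ss sc ε hμ)

lemma fEps_scale (ss sc ε μ lam : ℝ) (hss : 0 ≤ ss) (hsc : 0 ≤ sc) (hμ : 0 ≤ μ)
    (h0 : 0 ≤ lam) (h1 : lam ≤ 1) :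
    fEps ss sc ε (lam * μ) ≤ lam * fEps ss sc ε μ + (1 - lam) * ss := by
  rcases eq_or_lt_of_le h0 with h | hlam
  · have : fEps ss sc ε (0 * μ) ≤ ss := by
      rw [zero_mul]; exact fEps_le_ss ss sc ε 0 hss hsc le_rfl
    rw [← h]; linarith
  · have key : ∀ d ∈ {d : ℝ | ∃ θ g : ℝ, 0 ≤ θ ∧ θ ≤ 1 ∧ 0 ≤ g ∧ θ * ε + g ≤ μ ∧
        d = (1 - θ) * ss + θ ^ 2 * ss * sc / (θ * sc + g)},
        (fEps ss sc ε (lam * μ) - (1 - lam) * ss) / lam ≤ d := by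
      rintro d ⟨θ, g, hθ0, hθ1, hg0, hfeas, rfl⟩
      rw [div_le_iff₀ hlam]
      have hmem : (1 - lam * θ) * ss + (lam * θ) ^ 2 * ss * sc / ((lam * θ) * sc + lam * g)
          ∈ {d : ℝ | ∃ θ g : ℝ, 0 ≤ θ ∧ θ ≤ 1 ∧ 0 ≤ g ∧ θ * ε + g ≤ lam * μ ∧
            d = (1 - θ) * ss + θ ^ 2 * ss * sc / (θ * sc + g)} := by
        refine ⟨lam * θ, lam * g, mul_nonneg h0 hθ0, mul_le_one₀ h1 hθ0 hθ1,
          mul_nonneg h0 hg0, ?_, rfl⟩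
        calc lam * θ * ε + lam * g = lam * (θ * ε + g) := by ring
          _ ≤ lam * μ := mul_le_mul_of_nonneg_left hfeas h0
      have hle := csInf_le ⟨0, fEps_lb ss sc ε (lam * μ) hss hsc⟩ hmem
      have heq : (1 - lam * θ) * ss + (lam * θ) ^ 2 * ss * sc / ((lam * θ) * sc + lam * g)
          = ((1 - θ) * ss + θ ^ 2 * ss * sc / (θ * sc + g)) * lam + (1 - lam) * ss := by
        have h2 : (lam * θ) ^ 2 * ss * sc / ((lam * θ) * sc + lam * g)
            = lam * (θ ^ 2 * ss * sc / (θ * sc + g)) := by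
          rw [show (lam * θ) * sc + lam * g = lam * (θ * sc + g) by ring,
            show (lam * θ) ^ 2 * ss * sc = lam * (lam * (θ ^ 2 * ss * sc)) by ring,
            mul_div_mul_left _ _ (ne_of_gt hlam), mul_div_assoc]
        rw [h2]; ring
      rw [heq] at hle
      have hle' : fEps ss sc ε (lam * μ)
          ≤ ((1 - θ) * ss + θ ^ 2 * ss * sc / (θ * sc + g)) * lam + (1 - lam) * ss := hle
      linarith
    have h3 := le_csInf ⟨ss, fEps_mem_ss ss sc ε hμ⟩ key
    rw [div_le_iff₀ hlam] at h3
    have h3' : fEps ss sc ε (lam * μ) - (1 - lam) * ss ≤ fEps ss sc ε μ * lam := h3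
    linarith

lemma hkey_alg (p q F ss x n : ℝ) (hpq : p = 1 - q) (hq : q - 1 ≠ 0) :
    p * x * ((n + 1) * ss + (F - ss) * ((x * q - 1) / (q - 1)))
      = p * ss * (n * x) + (p * ss + F - ss) * x + (ss - F) * q * x ^ 2 := by
  subst hpq; field_simp; ring

lemma hkey2_alg (p F ss : ℝ) (hp0 : 0 < p) (hp2 : 0 < 2 - p) :
    p * (p * ss * ((1 - p) / p ^ 2) + (p * ss + F - ss) * p⁻¹
        + (ss - F) * (1 - p) * (p * (2 - p))⁻¹)
      = F + (ss - F) * ((1 - p) / (2 - p)) := by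
  field_simp
  ring

/-- the renewal-averaged long term distortion of the fixed fraction policy
with sampling costs, under Bernoulli energy arrivals, is at most `f_ε(μ) + σ_s²/2`. -/
theorem ffp_distortion_upper_bound_sampling (ss sc ε μ p : ℝ) (hss : 0 < ss) (hsc : 0 < sc)
    (hε : 0 < ε) (hμ : 0 ≤ μ) (hp0 : 0 < p) (hp1 : p ≤ 1) :
    p * ∑' k : ℕ, p * (1 - p) ^ k *
        (∑ t ∈ Finset.range (k + 1), fEps ss sc ε ((1 - p) ^ t * μ)) ≤
      fEps ss sc ε μ + ss / 2 := by
  set q : ℝ := 1 - p with hqdef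
  have hq0 : 0 ≤ q := by simp only [hqdef]; linarith
  have hq1 : q < 1 := by simp only [hqdef]; linarith
  have hpq : p = 1 - q := by simp only [hqdef]; ring
  set F := fEps ss sc ε μ with hFdef
  have hF0 : 0 ≤ F := fEps_nonneg ss sc ε μ hss.le hsc.le hμ
  have hFss : F ≤ ss := fEps_le_ss ss sc ε μ hss.le hsc.le hμ
  set a : ℕ → ℝ := fun k =>
    p * q ^ k * ∑ t ∈ Finset.range (k + 1), fEps ss sc ε (q ^ t * μ) with hadef
  set b : ℕ → ℝ := fun k =>
    (p * ss) * (k * q ^ k) + (p * ss + F - ss) * q ^ k + ((ss - F) * q) * (q ^ 2) ^ k with hbdef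
  -- closed form of the bounding inner sum
  have hsum : ∀ k : ℕ, ∑ t ∈ Finset.range (k + 1), (q ^ t * F + (1 - q ^ t) * ss)
      = ((k : ℝ) + 1) * ss + (F - ss) * ((q ^ (k + 1) - 1) / (q - 1)) := by
    intro k
    have hterm : ∀ t ∈ Finset.range (k + 1),
        q ^ t * F + (1 - q ^ t) * ss = ss + (F - ss) * q ^ t := fun t _ => by ring
    rw [Finset.sum_congr rfl hterm, Finset.sum_add_distrib, Finset.sum_const,
      Finset.card_range, ← Finset.mul_sum, geom_sum_eq (ne_of_lt hq1)]
    push_cast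
    ring
  have hq1' : q - 1 ≠ 0 := sub_ne_zero.mpr (ne_of_lt hq1)
  have hkey : ∀ k : ℕ,
      p * q ^ k * (((k : ℝ) + 1) * ss + (F - ss) * ((q ^ (k + 1) - 1) / (q - 1))) = b k := by
    intro k
    have h1 : (q ^ 2) ^ k = (q ^ k) ^ 2 := by rw [← pow_mul, ← pow_mul, mul_comm]
    show _ = p * ss * (k * q ^ k) + (p * ss + F - ss) * q ^ k + (ss - F) * q * (q ^ 2) ^ k
    rw [h1, pow_succ]
    exact hkey_alg p q F ss (q ^ k) k hpq hq1'
  have hab : ∀ k, a k ≤ b k := by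
    intro k
    have hstep : ∑ t ∈ Finset.range (k + 1), fEps ss sc ε (q ^ t * μ)
        ≤ ∑ t ∈ Finset.range (k + 1), (q ^ t * F + (1 - q ^ t) * ss) :=
      Finset.sum_le_sum fun t _ =>
        fEps_scale ss sc ε μ (q ^ t) hss.le hsc.le hμ (pow_nonneg hq0 t)
          (pow_le_one₀ hq0 hq1.le)
    calc a k ≤ p * q ^ k * ∑ t ∈ Finset.range (k + 1), (q ^ t * F + (1 - q ^ t) * ss) :=
          mul_le_mul_of_nonneg_left hstep (by positivity)
      _ = b k := by rw [hsum k]; exact hkey k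
  have ha0 : ∀ k, 0 ≤ a k := by
    intro k
    refine mul_nonneg (by positivity) (Finset.sum_nonneg fun t _ => ?_)
    exact fEps_nonneg ss sc ε _ hss.le hsc.le (mul_nonneg (pow_nonneg hq0 t) hμ)
  have hqnorm : ‖q‖ < 1 := by rw [Real.norm_eq_abs, abs_of_nonneg hq0]; exact hq1
  have hs1 : Summable fun k : ℕ => (k : ℝ) * q ^ k :=
    (hasSum_coe_mul_geometric_of_norm_lt_one hqnorm).summable
  have hs2 : Summable fun k : ℕ => q ^ k := summable_geometric_of_lt_one hq0 hq1
  have hq2 : q ^ 2 < 1 := by nlinarith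
  have hs3 : Summable fun k : ℕ => (q ^ 2) ^ k :=
    summable_geometric_of_lt_one (by positivity) hq2
  have hbs : Summable b := ((hs1.mul_left _).add (hs2.mul_left _)).add (hs3.mul_left _)
  have has : Summable a := Summable.of_nonneg_of_le ha0 hab hbs
  have htle : ∑' k, a k ≤ ∑' k, b k := Summable.tsum_le_tsum hab has hbs
  have htb : ∑' k, b k = (p * ss) * (q / (1 - q) ^ 2) + (p * ss + F - ss) * (1 - q)⁻¹
      + ((ss - F) * q) * (1 - q ^ 2)⁻¹ := by
    rw [hbdef]
    rw [Summable.tsum_add ((hs1.mul_left _).add (hs2.mul_left _)) (hs3.mul_left _),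
      Summable.tsum_add (hs1.mul_left _) (hs2.mul_left _), tsum_mul_left, tsum_mul_left, tsum_mul_left,
      tsum_geometric_of_lt_one hq0 hq1, tsum_geometric_of_lt_one (by positivity) hq2,
      tsum_coe_mul_geometric_of_norm_lt_one hqnorm]
  have hfin : p * ∑' k, b k ≤ F + ss / 2 := by
    rw [htb]
    have h1q : 1 - q = p := by simp only [hqdef]; ring
    have hp2 : (0:ℝ) < 2 - p := by linarith
    have h2q : 1 - q ^ 2 = p * (2 - p) := by simp only [hqdef]; ring
    rw [h1q, h2q, hqdef, hkey2_alg p F ss hp0 hp2]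
    have hdiv : (1 - p) / (2 - p) ≤ 1 / 2 := by
      rw [div_le_div_iff₀ hp2 two_pos]
      linarith
    have hdiv0 : 0 ≤ (1 - p) / (2 - p) := div_nonneg (by linarith) hp2.le
    nlinarith [mul_le_mul_of_nonneg_left hdiv (by linarith : (0:ℝ) ≤ ss - F)]
  calc p * ∑' k : ℕ, p * q ^ k *
        (∑ t ∈ Finset.range (k + 1), fEps ss sc ε (q ^ t * μ))
      = p * ∑' k, a k := rfl
    _ ≤ p * ∑' k, b k := mul_le_mul_of_nonneg_left htle hp0.le
    _ ≤ F + ss / 2 := hfin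
end

section
/- Let σ_s² > 0, σ_c² > 0, ε > 0 and E > 0. Define θ̃ = min{E/(ε + √(εσ_c²)), 1} and g̃ = max{E - ε, √(εσ_c²)}. Then 0 ≤ θ̃ ≤ 1, g̃ ≥ 0, θ̃(ε + g̃) = E ≤ E, and the pair (θ̃, g̃) achieves the minimum of (1-θ)σ_s² + θσ_s²/(1 + g/σ_c²) over all θ ∈ [0,1] and g ≥ 0 with θ(ε + g) ≤ E; in particular this minimum value equals f_ε(E). -/
set_option maxHeartbeats 800000

/-- the pair `θ̃ = min{E/(ε + √(εσ_c²)), 1}`, `g̃ = max{E - ε, √(εσ_c²)}`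
is feasible (it consumes exactly `E`) and minimizes `(1-θ)σ_s² + θσ_s²/(1 + g/σ_c²)` over
all `θ ∈ [0,1]`, `g ≥ 0` with `θ(ε + g) ≤ E`; the minimum value equals `f_ε(E)`. -/
theorem ffp_single_slot_optimizer (ss sc ε E : ℝ) (hss : 0 < ss) (hsc : 0 < sc)
    (hε : 0 < ε) (hE : 0 < E) :
    0 ≤ min (E / (ε + Real.sqrt (ε * sc))) 1 ∧
      min (E / (ε + Real.sqrt (ε * sc))) 1 ≤ 1 ∧
      0 ≤ max (E - ε) (Real.sqrt (ε * sc)) ∧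
      min (E / (ε + Real.sqrt (ε * sc))) 1 * (ε + max (E - ε) (Real.sqrt (ε * sc))) = E ∧
      E ≤ E ∧
      (∀ θ g : ℝ, 0 ≤ θ → θ ≤ 1 → 0 ≤ g → θ * (ε + g) ≤ E →
        (1 - min (E / (ε + Real.sqrt (ε * sc))) 1) * ss +
            min (E / (ε + Real.sqrt (ε * sc))) 1 * ss /
              (1 + max (E - ε) (Real.sqrt (ε * sc)) / sc) ≤
          (1 - θ) * ss + θ * ss / (1 + g / sc)) ∧
      (1 - min (E / (ε + Real.sqrt (ε * sc))) 1) * ss +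
          min (E / (ε + Real.sqrt (ε * sc))) 1 * ss /
            (1 + max (E - ε) (Real.sqrt (ε * sc)) / sc) =
        fEps ss sc ε E := by
  set s := Real.sqrt (ε * sc) with hs_def
  have hs : 0 < s := Real.sqrt_pos.mpr (by positivity)
  have hs2 : s ^ 2 = ε * sc := Real.sq_sqrt (by positivity)
  set θt := min (E / (ε + s)) 1 with hθt_def
  set gt := max (E - ε) s with hgt_def
  have hεs : 0 < ε + s := by linarith
  have hθtpos : 0 < θt := lt_min (by positivity) one_pos
  have hθt1 : θt ≤ 1 := min_le_right _ _
  have hgtpos : 0 < gt := lt_of_lt_of_le hs (le_max_right _ _)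
  have hbudget : θt * (ε + gt) = E := by
    rcases le_or_gt E (ε + s) with h | h
    · have h1 : θt = E / (ε + s) := min_eq_left ((div_le_one hεs).mpr h)
      have h2 : gt = s := max_eq_right (by linarith)
      rw [h1, h2]; field_simp
    · have h1 : θt = 1 := min_eq_right ((one_le_div hεs).mpr h.le)
      have h2 : gt = E - ε := max_eq_left (by linarith)
      rw [h1, h2]; ring
  -- rewrite of the objective
  have hD : ∀ t u : ℝ, 0 ≤ u →
      (1 - t) * ss + t * ss / (1 + u / sc) = ss - t * (u / (sc + u)) * ss := by
    intro t u hu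
    have h1 : (0:ℝ) < sc + u := by linarith
    field_simp
    ring
  -- main minimization claim
  have hmin : ∀ θ g : ℝ, 0 ≤ θ → θ ≤ 1 → 0 ≤ g → θ * (ε + g) ≤ E →
      (1 - θt) * ss + θt * ss / (1 + gt / sc) ≤ (1 - θ) * ss + θ * ss / (1 + g / sc) := by
    intro θ g hθ0 hθ1 hg0 hcon
    have hscg : (0:ℝ) < sc + g := by linarith
    have hscgt : (0:ℝ) < sc + gt := by linarith
    have hεg : (0:ℝ) < ε + g := by linarith
    rw [hD θ g hg0, hD θt gt hgtpos.le]
    have key : θ * (g / (sc + g)) ≤ θt * (gt / (sc + gt)) := by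
      have hθE : θ ≤ E / (ε + g) := (le_div_iff₀ hεg).mpr hcon
      rcases le_or_gt E (ε + s) with h | h
      · have h1 : θt = E / (ε + s) := min_eq_left ((div_le_one hεs).mpr h)
        have h2 : gt = s := max_eq_right (by linarith)
        rw [h1, h2]
        have step1 : θ * (g / (sc + g)) ≤ E / (ε + g) * (g / (sc + g)) := by
          apply mul_le_mul_of_nonneg_right hθE (by positivity)
        refine step1.trans ?_
        rw [div_mul_div_comm, div_mul_div_comm, div_le_div_iff₀ (by positivity) (by positivity)]
        have hid : E * s * ((ε + g) * (sc + g)) - E * g * ((ε + s) * (sc + s))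
            = E * s * (g - s) ^ 2 := by linear_combination E * (g - s) * hs2
        nlinarith [mul_nonneg (mul_nonneg hE.le hs.le) (sq_nonneg (g - s))]
      · have h1 : θt = 1 := min_eq_right ((one_le_div hεs).mpr h.le)
        have h2 : gt = E - ε := max_eq_left (by linarith)
        rw [h1, h2, one_mul]
        have hEe : s < E - ε := by linarith
        have hsce : (0:ℝ) < sc + (E - ε) := by linarith
        rcases le_or_gt g (E - ε) with hle | hlt
        · have step1 : θ * (g / (sc + g)) ≤ g / (sc + g) := by
            nlinarith [div_nonneg hg0 hscg.le]
          refine step1.trans ?_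
          rw [div_le_div_iff₀ hscg hsce]
          nlinarith
        · have step1 : θ * (g / (sc + g)) ≤ E / (ε + g) * (g / (sc + g)) := by
            apply mul_le_mul_of_nonneg_right hθE (by positivity)
          refine step1.trans ?_
          rw [div_mul_div_comm, div_le_div_iff₀ (by positivity) hsce]
          have hfac : (g - (E - ε)) * ((E - ε) * g - ε * sc) ≥ 0 := by
            apply mul_nonneg (by linarith)
            nlinarith
          nlinarith
    nlinarith [mul_le_mul_of_nonneg_right key hss.le]
  have hscgt : (0:ℝ) < sc + gt := by linarith
  refine ⟨le_of_lt hθtpos, hθt1, by positivity, hbudget, le_refl E, hmin, ?_⟩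
  -- the sInf part
  set V := (1 - θt) * ss + θt * ss / (1 + gt / sc) with hV_def
  set S := {d : ℝ | ∃ θ g : ℝ, 0 ≤ θ ∧ θ ≤ 1 ∧ 0 ≤ g ∧ θ * ε + g ≤ E ∧
    d = (1 - θ) * ss + θ ^ 2 * ss * sc / (θ * sc + g)} with hS_def
  have hmem : V ∈ S := by
    refine ⟨θt, θt * gt, hθtpos.le, hθt1, by positivity, ?_, ?_⟩
    · nlinarith
    · have hden : θt * sc + θt * gt = θt * (sc + gt) := by ring
      rw [hV_def, hden]
      have h1 : (1 + gt / sc) ≠ 0 := by positivity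
      field_simp
  have hlb : ∀ d ∈ S, V ≤ d := by
    rintro d ⟨θ, g, hθ0, hθ1, hg0, hcon, rfl⟩
    rcases eq_or_lt_of_le hθ0 with h0 | h0
    · have : (1 - θ) * ss + θ ^ 2 * ss * sc / (θ * sc + g) = ss := by
        rw [← h0]; simp
      rw [this]
      have := hmin 0 0 le_rfl zero_le_one le_rfl (by linarith)
      simpa using this
    · have hg' : (0:ℝ) ≤ g / θ := div_nonneg hg0 h0.le
      have hcon' : θ * (ε + g / θ) ≤ E := by
        have : θ * (ε + g / θ) = θ * ε + g := by field_simp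
        rw [this]; exact hcon
      have heq : (1 - θ) * ss + θ ^ 2 * ss * sc / (θ * sc + g)
          = (1 - θ) * ss + θ * ss / (1 + (g / θ) / sc) := by
        have hden : (0:ℝ) < θ * sc + g := by positivity
        have h1 : (1 + (g / θ) / sc) ≠ 0 := by positivity
        field_simp
      rw [heq]
      exact hmin θ (g / θ) hθ0 hθ1 hg' hcon'
  rw [fEps]
  exact le_antisymm (le_csInf ⟨V, hmem⟩ hlb) (csInf_le ⟨V, hlb⟩ hmem)
end

section
/- Let σ_s² > 0, σ_c² > 0, ε > 0 and E ≥ 0. If E ≥ ε + √(εσ_c²), then f_ε(E) = σ_s²σ_c²/(σ_c² + E - ε). If 0 ≤ E ≤ ε + √(εσ_c²), then f_ε(E) = σ_s² − σ_s² · (E/(ε + √(εσ_c²))) · (√(ε/σ_c²)/(1 + √(ε/σ_c²))). -/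
set_option maxHeartbeats 1000000 in
/-- closed forms for `f_ε(E)`:
if `E ≥ ε + √(εσ_c²)` then `f_ε(E) = σ_s²σ_c²/(σ_c² + E - ε)`, and if
`0 ≤ E ≤ ε + √(εσ_c²)` then
`f_ε(E) = σ_s² − σ_s² (E/(ε + √(εσ_c²))) (√(ε/σ_c²)/(1 + √(ε/σ_c²)))`. -/
theorem fEps_closed_form (ss sc ε E : ℝ) (hss : 0 < ss) (hsc : 0 < sc) (hε : 0 < ε)
    (hE : 0 ≤ E) :
    (ε + Real.sqrt (ε * sc) ≤ E → fEps ss sc ε E = ss * sc / (sc + E - ε)) ∧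
      (E ≤ ε + Real.sqrt (ε * sc) →
        fEps ss sc ε E =
          ss - ss * (E / (ε + Real.sqrt (ε * sc))) *
            (Real.sqrt (ε / sc) / (1 + Real.sqrt (ε / sc)))) := by
  have ha : 0 < Real.sqrt ε := Real.sqrt_pos.2 hε
  have hb : 0 < Real.sqrt sc := Real.sqrt_pos.2 hsc
  set a := Real.sqrt ε with ha'
  set b := Real.sqrt sc with hb'
  have ha2 : a ^ 2 = ε := Real.sq_sqrt hε.le
  have hb2 : b ^ 2 = sc := Real.sq_sqrt hsc.le
  have hab : Real.sqrt (ε * sc) = a * b := Real.sqrt_mul hε.le sc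
  have hdb : Real.sqrt (ε / sc) = a / b := Real.sqrt_div hε.le sc
  have habpos : 0 < a * b := mul_pos ha hb
  rw [hab, hdb]
  constructor
  · -- case E ≥ ε + √(εsc)
    intro h1
    have hden : 0 < sc + E - ε := by nlinarith
    unfold fEps
    have hmem : ss * sc / (sc + E - ε) ∈ {d : ℝ | ∃ θ g : ℝ, 0 ≤ θ ∧ θ ≤ 1 ∧ 0 ≤ g ∧
        θ * ε + g ≤ E ∧ d = (1 - θ) * ss + θ ^ 2 * ss * sc / (θ * sc + g)} := by
      refine ⟨1, E - ε, by norm_num, le_refl 1, by nlinarith, by linarith, ?_⟩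
      ring_nf
    have hlb : ∀ d ∈ {d : ℝ | ∃ θ g : ℝ, 0 ≤ θ ∧ θ ≤ 1 ∧ 0 ≤ g ∧
        θ * ε + g ≤ E ∧ d = (1 - θ) * ss + θ ^ 2 * ss * sc / (θ * sc + g)},
        ss * sc / (sc + E - ε) ≤ d := by
      rintro d ⟨θ, g, hθ0, hθ1, hg0, hμ, rfl⟩
      rcases eq_or_lt_of_le (by positivity : (0:ℝ) ≤ θ * sc + g) with hQ | hQ
      · -- degenerate: θ = 0, g = 0
        have hθz : θ = 0 := by nlinarith
        have hgz : g = 0 := by nlinarith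
        subst hθz; subst hgz
        norm_num
        rw [div_le_iff₀ hden]
        nlinarith
      · have hd : (1 - θ) * ss + θ ^ 2 * ss * sc / (θ * sc + g)
            = ((1 - θ) * ss * (θ * sc + g) + θ ^ 2 * ss * sc) / (θ * sc + g) := by
          field_simp
        rw [hd, div_le_div_iff₀ hden hQ]
        -- key polynomial inequality (without the ss factor)
        have hA : 0 ≤ (E - ε) + ε * (1 - θ) - g := by linarith
        have h1θ : (0:ℝ) ≤ 1 - θ := by linarith
        have hDpos : 0 < E - ε := by nlinarith
        have hgmax : 0 < (E - ε) + ε * (1 - θ) := by positivity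
        have hD2 : ε * sc ≤ (E - ε) ^ 2 := by nlinarith [sq_nonneg (E - ε - a * b)]
        have hE0 : 0 ≤ (E - ε) * θ * sc := by positivity
        have hEg : 0 ≤ (1 - θ) * ((E - ε) ^ 2 + (E - ε) * ε * (1 - θ) - θ * sc * ε) := by
          have h3 : 0 ≤ (E - ε) ^ 2 + (E - ε) * ε * (1 - θ) - θ * sc * ε := by
            nlinarith [mul_nonneg (mul_nonneg hε.le hsc.le) h1θ,
              mul_nonneg (mul_nonneg hDpos.le hε.le) h1θ]
          positivity
        have hprod : 0 ≤ ((E - ε) + ε * (1 - θ)) *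
            ((E - ε) * θ * sc + (E - ε) * g * (1 - θ) - θ * g * sc) := by
          nlinarith [mul_nonneg hA hE0, mul_nonneg hg0 hEg]
        have key : 0 ≤ (E - ε) * θ * sc + (E - ε) * g * (1 - θ) - θ * g * sc :=
          nonneg_of_mul_nonneg_right hprod hgmax
        nlinarith [mul_nonneg hss.le key]
      -- end
    exact le_antisymm (csInf_le ⟨_, hlb⟩ hmem) (le_csInf ⟨_, hmem⟩ hlb)
  · -- case E ≤ ε + √(εsc)
    intro h2
    have hsum : 0 < a + b := by linarith
    have hveq : ss - ss * (E / (ε + a * b)) * (a / b / (1 + a / b))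
        = ss * ((a + b) ^ 2 - E) / (a + b) ^ 2 := by
      rw [← ha2]
      have h1 : a ^ 2 + a * b ≠ 0 := by positivity
      have h2 : (1 : ℝ) + a / b ≠ 0 := by positivity
      field_simp
      ring
    rw [hveq]
    unfold fEps
    have hd2 : 0 < ε + a * b := by positivity
    set θ₀ : ℝ := E / (ε + a * b) with hθ₀
    have hθ₀0 : 0 ≤ θ₀ := div_nonneg hE hd2.le
    have hθ₀1 : θ₀ ≤ 1 := (div_le_one hd2).2 h2
    have hEθ : θ₀ * ε + θ₀ * (a * b) = E := by
      rw [hθ₀]; field_simp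
    have hmem : ss * ((a + b) ^ 2 - E) / (a + b) ^ 2 ∈ {d : ℝ | ∃ θ g : ℝ, 0 ≤ θ ∧ θ ≤ 1 ∧
        0 ≤ g ∧ θ * ε + g ≤ E ∧ d = (1 - θ) * ss + θ ^ 2 * ss * sc / (θ * sc + g)} := by
      refine ⟨θ₀, θ₀ * (a * b), hθ₀0, hθ₀1, by positivity, le_of_eq hEθ, ?_⟩
      rcases eq_or_lt_of_le hθ₀0 with h0 | h0
      · -- θ₀ = 0, i.e. E = 0
        have hE0 : E = 0 := by
          have := hEθ
          rw [← h0] at this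
          simpa using this.symm
        rw [← h0, hE0]
        norm_num
        field_simp
      · have hQne : θ₀ * sc + θ₀ * (a * b) ≠ 0 := by positivity
        have hEval : E = θ₀ * (ε + a * b) := by rw [hθ₀, div_mul_cancel₀ _ hd2.ne']
        rw [hEval, ← ha2, ← hb2]
        field_simp
        ring
    have hlb : ∀ d ∈ {d : ℝ | ∃ θ g : ℝ, 0 ≤ θ ∧ θ ≤ 1 ∧ 0 ≤ g ∧
        θ * ε + g ≤ E ∧ d = (1 - θ) * ss + θ ^ 2 * ss * sc / (θ * sc + g)},
        ss * ((a + b) ^ 2 - E) / (a + b) ^ 2 ≤ d := by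
      rintro d ⟨θ, g, hθ0, hθ1, hg0, hμ, rfl⟩
      have hsq : (0:ℝ) < (a + b) ^ 2 := by positivity
      rcases eq_or_lt_of_le (by positivity : (0:ℝ) ≤ θ * sc + g) with hQ | hQ
      · have hθz : θ = 0 := by nlinarith
        have hgz : g = 0 := by nlinarith
        subst hθz; subst hgz
        norm_num
        rw [div_le_iff₀ hsq]
        nlinarith
      · have hd : (1 - θ) * ss + θ ^ 2 * ss * sc / (θ * sc + g)
            = ((1 - θ) * ss * (θ * sc + g) + θ ^ 2 * ss * sc) / (θ * sc + g) := by
          field_simp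
        rw [hd, div_le_div_iff₀ hsq hQ]
        have hμ' : θ * a ^ 2 + g ≤ E := by rw [ha2]; exact hμ
        have hQb : (0:ℝ) ≤ θ * b ^ 2 + g := by rw [hb2]; exact hQ.le
        have key : ((a + b) ^ 2 - E) * (θ * sc + g)
            ≤ ((1 - θ) * (θ * sc + g) + θ ^ 2 * sc) * (a + b) ^ 2 := by
          rw [← hb2]
          nlinarith [sq_nonneg (θ * a * b - g),
            mul_nonneg (by linarith : (0:ℝ) ≤ E - (θ * a ^ 2 + g)) hQb]
        nlinarith [mul_le_mul_of_nonneg_left key hss.le]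
    exact le_antisymm (csInf_le ⟨_, hlb⟩ hmem) (le_csInf ⟨_, hmem⟩ hlb)
end
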